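/- arXiv:2203.16656 — 2 statements merged into one kernel-verified Lean document; each statement's English description precedes it below -/
import Mathlib

section
/- Let Λ > 0 and let p(r) = (Λ/3)r⁴ − r² + 2mr − Q² with m, Q ∈ ℝ. Then p has exactly three distinct positive real roots and exactly one negative real root if and only if 0 < Q² < 1/(4Λ) and ((2 + √(1 − 4ΛQ²))/(3√(2Λ)))·√(1 − √(1 − 4ΛQ²)) < m < ((2 − √(1 − 4ΛQ²))/(3√(2Λ)))·√(1 + √(1 − 4ΛQ²)). -/
/-!
For `r ≠ 0` one has `p(r) = 2r (m - M(r))` with `M(r) = Q²/(2r) + r/2 - Λr³/6`, so the positive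
roots of `p` are the positive solutions of `M(r) = m`, and the negative roots are the negatives of
the positive solutions of `M(r) = -m`. Since `M'(r) = -(Λr⁴ - r² + Q²)/(2r²)`, for
`0 < 4ΛQ² ≤ 1` the function `M` decreases on `(0, r₋]`, increases on `[r₋, r₊]` and decreases on
`[r₊, ∞)`, where `r₋² ≤ r₊²` are the roots of `Λx² - x + Q²`; it tends to `+∞` at `0⁺` and to `-∞`
at `∞`. So `M(r) = m` has three positive solutions exactly when `M(r₋) < m < M(r₊)`, and then
`M(r) = -m` has exactly one because `M(r₋) ≥ 0`. For `Q = 0` or `4ΛQ² > 1` the function `M` has at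
most two monotone pieces on `(0, ∞)`. The bounds on `m` in the theorem are `M(r₋)` and `M(r₊)`.
-/

open Set Filter Topology Real

lemma Set.InjOn.encard_inter_preimage_singleton_le_one {α β : Type*} {f : α → β} {s : Set α}
    (h : InjOn f s) (c : β) : (s ∩ f ⁻¹' {c}).encard ≤ 1 :=
  encard_le_one_iff.2 fun _ _ hx hy => h hx.1 hy.1 (hx.2.trans hy.2.symm)

section DownUpDown

variable {f : ℝ → ℝ} {a b c : ℝ}

lemma encard_fiber_le_three (h₁ : InjOn f (Ioc 0 a)) (h₂ : InjOn f (Icc a b))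
    (h₃ : InjOn f (Ici b)) : (Ioi 0 ∩ f ⁻¹' {c}).encard ≤ 3 := by
  have hcover : Ioi 0 ∩ f ⁻¹' {c} ⊆
      (Ioc 0 a ∩ f ⁻¹' {c}) ∪ (Icc a b ∩ f ⁻¹' {c}) ∪ (Ici b ∩ f ⁻¹' {c}) := by
    rintro r ⟨hr, hfr⟩
    rcases le_or_gt r a with hra | hra
    · exact Or.inl (Or.inl ⟨⟨hr, hra⟩, hfr⟩)
    rcases le_or_gt r b with hrb | hrb
    · exact Or.inl (Or.inr ⟨⟨hra.le, hrb⟩, hfr⟩)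
    · exact Or.inr ⟨hrb.le, hfr⟩
  calc _ ≤ _ := encard_le_encard hcover
    _ ≤ _ := (encard_union_le _ _).trans (add_le_add_left (encard_union_le _ _) _)
    _ ≤ 1 + 1 + 1 := by
      gcongr <;> apply InjOn.encard_inter_preimage_singleton_le_one <;> assumption
    _ = 3 := by norm_num

lemma encard_fiber_le_two_of_le_left (ha : 0 < a) (hab : a ≤ b) (h₁ : StrictAntiOn f (Ioc 0 a))
    (h₂ : StrictMonoOn f (Icc a b)) (h₃ : InjOn f (Ici b)) (hc : c ≤ f a) :
    (Ioi 0 ∩ f ⁻¹' {c}).encard ≤ 2 := by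
  have hcover : Ioi 0 ∩ f ⁻¹' {c} ⊆ {a} ∪ (Ici b ∩ f ⁻¹' {c}) := by
    rintro r ⟨hr, hfr : f r = c⟩
    rcases lt_trichotomy r a with hra | rfl | hra
    · linarith [h₁ ⟨hr, hra.le⟩ ⟨ha, le_rfl⟩ hra]
    · exact Or.inl rfl
    rcases le_or_gt b r with hbr | hrb
    · exact Or.inr ⟨hbr, hfr⟩
    · linarith [h₂ ⟨le_rfl, hab⟩ ⟨hra.le, hrb.le⟩ hra]
  calc _ ≤ _ := encard_le_encard hcover
    _ ≤ 1 + 1 := (encard_union_le _ _).trans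
      (add_le_add (encard_singleton a).le (h₃.encard_inter_preimage_singleton_le_one c))
    _ = 2 := by norm_num

lemma encard_fiber_le_two_of_right_le (hab : a ≤ b) (h₁ : InjOn f (Ioc 0 a))
    (h₂ : StrictMonoOn f (Icc a b)) (h₃ : StrictAntiOn f (Ici b)) (hc : f b ≤ c) :
    (Ioi 0 ∩ f ⁻¹' {c}).encard ≤ 2 := by
  have hcover : Ioi 0 ∩ f ⁻¹' {c} ⊆ (Ioc 0 a ∩ f ⁻¹' {c}) ∪ {b} := by
    rintro r ⟨hr, hfr : f r = c⟩
    rcases le_or_gt r a with hra | hra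
    · exact Or.inl ⟨⟨hr, hra⟩, hfr⟩
    rcases lt_trichotomy r b with hrb | rfl | hrb
    · linarith [h₂ ⟨hra.le, hrb.le⟩ ⟨hab, le_rfl⟩ hrb]
    · exact Or.inr rfl
    · linarith [h₃ (mem_Ici.2 le_rfl) hrb.le hrb]
  calc _ ≤ _ := encard_le_encard hcover
    _ ≤ 1 + 1 := (encard_union_le _ _).trans
      (add_le_add (h₁.encard_inter_preimage_singleton_le_one c) (encard_singleton b).le)
    _ = 2 := by norm_num

lemma lt_and_lt_of_encard_fiber_eq_three (ha : 0 < a) (hab : a ≤ b)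
    (h₁ : StrictAntiOn f (Ioc 0 a)) (h₂ : StrictMonoOn f (Icc a b)) (h₃ : StrictAntiOn f (Ici b))
    (h : (Ioi 0 ∩ f ⁻¹' {c}).encard = 3) : f a < c ∧ c < f b := by
  constructor
  · by_contra! hc
    have := encard_fiber_le_two_of_le_left ha hab h₁ h₂ h₃.injOn hc
    rw [h] at this
    norm_num at this
  · by_contra! hc
    have := encard_fiber_le_two_of_right_le hab h₁.injOn h₂ h₃ hc
    rw [h] at this
    norm_num at this

lemma exists_mem_Ioo_apply_eq_of_tendsto_atTop (ha : 0 < a) (hcont : ContinuousOn f (Ioc 0 a))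
    (h₀ : Tendsto f (𝓝[>] 0) atTop) (hc : f a < c) : ∃ x ∈ Ioo 0 a, f x = c := by
  obtain ⟨ε, hcε, hε⟩ := ((h₀.eventually (eventually_gt_atTop c)).and (Ioo_mem_nhdsGT ha)).exists
  obtain ⟨x, hx, hfx⟩ := intermediate_value_Ioo' hε.2.le
    (hcont.mono fun r hr => ⟨hε.1.trans_le hr.1, hr.2⟩) ⟨hc, hcε⟩
  exact ⟨x, ⟨hε.1.trans hx.1, hx.2⟩, hfx⟩

lemma exists_mem_Ioi_apply_eq_of_tendsto_atBot (hcont : ContinuousOn f (Ici b))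
    (hTop : Tendsto f atTop atBot) (hc : c < f b) : ∃ x ∈ Ioi b, f x = c := by
  obtain ⟨R, hRc, hbR⟩ :=
    ((hTop.eventually (eventually_lt_atBot c)).and (eventually_gt_atTop b)).exists
  obtain ⟨x, hx, hfx⟩ := intermediate_value_Ioo' hbR.le (hcont.mono Icc_subset_Ici_self) ⟨hRc, hc⟩
  exact ⟨x, hx.1, hfx⟩

lemma encard_fiber_eq_three (ha : 0 < a) (hab : a ≤ b) (h₁ : StrictAntiOn f (Ioc 0 a))
    (h₂ : StrictMonoOn f (Icc a b)) (h₃ : StrictAntiOn f (Ici b)) (hcont : ContinuousOn f (Ioi 0))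
    (h₀ : Tendsto f (𝓝[>] 0) atTop) (hTop : Tendsto f atTop atBot) (hac : f a < c) (hcb : c < f b) :
    (Ioi 0 ∩ f ⁻¹' {c}).encard = 3 := by
  obtain ⟨x₁, hx₁, hfx₁⟩ :=
    exists_mem_Ioo_apply_eq_of_tendsto_atTop ha (hcont.mono Ioc_subset_Ioi_self) h₀ hac
  obtain ⟨x₂, hx₂, hfx₂⟩ :=
    intermediate_value_Ioo hab (hcont.mono fun r hr => ha.trans_le hr.1) ⟨hac, hcb⟩
  obtain ⟨x₃, hx₃, hfx₃⟩ := exists_mem_Ioi_apply_eq_of_tendsto_atBot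
    (hcont.mono fun r hr => (ha.trans_le hab).trans_le hr) hTop hcb
  have h₁₂ : x₁ < x₂ := hx₁.2.trans hx₂.1
  have h₂₃ : x₂ < x₃ := hx₂.2.trans hx₃
  have hsub : ({x₁, x₂, x₃} : Set ℝ) ⊆ Ioi 0 ∩ f ⁻¹' {c} := by
    rintro r (rfl | rfl | rfl)
    · exact ⟨hx₁.1, hfx₁⟩
    · exact ⟨hx₁.1.trans h₁₂, hfx₂⟩
    · exact ⟨(hx₁.1.trans h₁₂).trans h₂₃, hfx₃⟩
  refine le_antisymm (encard_fiber_le_three h₁.injOn h₂.injOn h₃.injOn) ?_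
  calc (3 : ℕ∞) = ({x₁, x₂, x₃} : Set ℝ).encard :=
        (encard_eq_three.2 ⟨x₁, x₂, x₃, h₁₂.ne, (h₁₂.trans h₂₃).ne, h₂₃.ne, rfl⟩).symm
    _ ≤ _ := encard_le_encard hsub

lemma encard_fiber_eq_one (ha : 0 < a) (hab : a ≤ b) (h₁ : StrictAntiOn f (Ioc 0 a))
    (h₂ : StrictMonoOn f (Icc a b)) (h₃ : StrictAntiOn f (Ici b)) (hcont : ContinuousOn f (Ici b))
    (hTop : Tendsto f atTop atBot) (hc : c < f a) : (Ioi 0 ∩ f ⁻¹' {c}).encard = 1 := by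
  have hsub : Ioi 0 ∩ f ⁻¹' {c} ⊆ Ici b ∩ f ⁻¹' {c} := by
    rintro r ⟨hr, hfr : f r = c⟩
    refine ⟨mem_Ici.2 (le_of_not_gt fun hrb => ?_), hfr⟩
    rcases le_or_gt r a with hra | hra
    · linarith [h₁.antitoneOn ⟨hr, hra⟩ ⟨ha, le_rfl⟩ hra]
    · linarith [h₂ ⟨le_rfl, hab⟩ ⟨hra.le, hrb.le⟩ hra]
  obtain ⟨x, hx, hfx⟩ := exists_mem_Ioi_apply_eq_of_tendsto_atBot hcont hTop
    (hc.trans_le (h₂.monotoneOn ⟨le_rfl, hab⟩ ⟨hab, le_rfl⟩ hab))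
  refine le_antisymm ((encard_le_encard hsub).trans
    (h₃.injOn.encard_inter_preimage_singleton_le_one c)) ?_
  exact one_le_encard_iff_nonempty.2 ⟨x, (ha.trans_le hab).trans hx, hfx⟩

end DownUpDown

/-- The mass `m` for which `r ≠ 0` is a root of `(Λ/3)r⁴ - r² + 2mr - Q²`. -/
noncomputable def horizonMass (Λ Q r : ℝ) : ℝ := Q ^ 2 / (2 * r) + r / 2 - Λ / 6 * r ^ 3

section HorizonMass

variable {Λ Q : ℝ}

lemma horizon_quartic_eq_zero_iff {m r : ℝ} (hr : r ≠ 0) :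
    Λ / 3 * r ^ 4 - r ^ 2 + 2 * m * r - Q ^ 2 = 0 ↔ horizonMass Λ Q r = m := by
  have h : Λ / 3 * r ^ 4 - r ^ 2 + 2 * m * r - Q ^ 2 = 2 * r * (m - horizonMass Λ Q r) := by
    unfold horizonMass
    field_simp
    ring
  simp [h, hr, sub_eq_zero, eq_comm]

lemma setOf_pos_horizon_root_eq (Λ m Q : ℝ) :
    {r : ℝ | 0 < r ∧ Λ / 3 * r ^ 4 - r ^ 2 + 2 * m * r - Q ^ 2 = 0} =
      Ioi 0 ∩ horizonMass Λ Q ⁻¹' {m} := by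
  ext r
  exact and_congr_right fun hr => horizon_quartic_eq_zero_iff hr.ne'

lemma encard_setOf_neg_horizon_root (Λ m Q : ℝ) :
    {r : ℝ | r < 0 ∧ Λ / 3 * r ^ 4 - r ^ 2 + 2 * m * r - Q ^ 2 = 0}.encard =
      (Ioi 0 ∩ horizonMass Λ Q ⁻¹' {-m}).encard := by
  rw [← setOf_pos_horizon_root_eq,
    ← encard_preimage_of_injective_subset_range neg_injective (by simp)]
  congr 1
  ext r
  simp only [mem_preimage, mem_ofPred_eq, neg_lt_zero]
  exact and_congr_right fun _ => by constructor <;> intro h <;> linarith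

lemma hasDerivAt_horizonMass (Λ Q : ℝ) {r : ℝ} (hr : r ≠ 0) :
    HasDerivAt (horizonMass Λ Q) (-(Λ * r ^ 4 - r ^ 2 + Q ^ 2) / (2 * r ^ 2)) r := by
  have h := (((hasDerivAt_inv hr).const_mul (Q ^ 2 / 2)).add ((hasDerivAt_id r).div_const 2)).sub
    ((hasDerivAt_pow 3 r).const_mul (Λ / 6))
  have hM : horizonMass Λ Q = fun x => Q ^ 2 / 2 * x⁻¹ + id x / 2 - Λ / 6 * x ^ 3 := by
    funext x
    simp only [horizonMass, id]
    ring
  rw [hM]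
  exact h.congr_deriv (by field_simp; ring)

lemma continuousOn_horizonMass (Λ Q : ℝ) : ContinuousOn (horizonMass Λ Q) (Ioi 0) :=
  fun _ hr => (hasDerivAt_horizonMass Λ Q (ne_of_gt hr)).continuousAt.continuousWithinAt

lemma strictMonoOn_horizonMass_of_quartic_neg {D : Set ℝ} (hD : Convex ℝ D) (hD₀ : D ⊆ Ioi 0)
    (h : ∀ r ∈ interior D, Λ * r ^ 4 - r ^ 2 + Q ^ 2 < 0) : StrictMonoOn (horizonMass Λ Q) D :=
  strictMonoOn_of_deriv_pos hD ((continuousOn_horizonMass Λ Q).mono hD₀) fun r hr => by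
    have hr₀ : r ≠ 0 := (hD₀ (interior_subset hr)).ne'
    rw [(hasDerivAt_horizonMass Λ Q hr₀).deriv]
    exact div_pos (neg_pos.2 (h r hr)) (by positivity)

lemma strictAntiOn_horizonMass_of_quartic_pos {D : Set ℝ} (hD : Convex ℝ D) (hD₀ : D ⊆ Ioi 0)
    (h : ∀ r ∈ interior D, 0 < Λ * r ^ 4 - r ^ 2 + Q ^ 2) : StrictAntiOn (horizonMass Λ Q) D :=
  strictAntiOn_of_deriv_neg hD ((continuousOn_horizonMass Λ Q).mono hD₀) fun r hr => by
    have hr₀ : r ≠ 0 := (hD₀ (interior_subset hr)).ne'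
    rw [(hasDerivAt_horizonMass Λ Q hr₀).deriv]
    exact div_neg_of_neg_of_pos (neg_neg_iff_pos.2 (h r hr)) (by positivity)

lemma tendsto_horizonMass_nhdsGT_zero (Λ : ℝ) (hQ : Q ≠ 0) :
    Tendsto (horizonMass Λ Q) (𝓝[>] 0) atTop := by
  have hcubic : Tendsto (fun r : ℝ => r / 2 - Λ / 6 * r ^ 3) (𝓝[>] 0) (𝓝 (0 / 2 - Λ / 6 * 0 ^ 3)) :=
    ((Continuous.tendsto (by fun_prop) 0).mono_left nhdsWithin_le_nhds)
  convert (tendsto_inv_nhdsGT_zero.const_mul_atTop (by positivity : 0 < Q ^ 2 / 2)).atTop_add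
    hcubic using 1
  funext r
  simp only [horizonMass]
  ring

lemma tendsto_horizonMass_atTop (Q : ℝ) (hΛ : 0 < Λ) : Tendsto (horizonMass Λ Q) atTop atBot := by
  have hcubic : Tendsto (fun r : ℝ => r * (Λ / 6 * r ^ 2 + -1 / 2)) atTop atTop :=
    tendsto_id.atTop_mul_atTop₀ (tendsto_atTop_add_const_right _ _
      ((tendsto_pow_atTop two_ne_zero).const_mul_atTop (by positivity)))
  have hcharge : Tendsto (fun r : ℝ => Q ^ 2 / (2 * r)) atTop (𝓝 0) :=
    tendsto_const_nhds.div_atTop (tendsto_id.const_mul_atTop two_pos)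
  convert hcharge.add_atBot (tendsto_neg_atTop_atBot.comp hcubic) using 1
  funext r
  simp only [horizonMass, Function.comp]
  ring

lemma strictAntiOn_horizonMass_Ioi (hΛ : 0 < Λ) (hD : 1 < 4 * Λ * Q ^ 2) :
    StrictAntiOn (horizonMass Λ Q) (Ioi 0) :=
  strictAntiOn_horizonMass_of_quartic_pos (convex_Ioi 0) subset_rfl fun r _ => by
    nlinarith [sq_nonneg (2 * Λ * r ^ 2 - 1)]

end HorizonMass

/-- For `4ΛQ² ≤ 1`, the squares of the two critical radii are the roots `(1 ∓ √(1 - 4ΛQ²))/(2Λ)`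
of `Λx² - x + Q²`, so these are the critical points of `horizonMass Λ Q` on `(0, ∞)`. -/
noncomputable def innerCriticalRadius (Λ Q : ℝ) : ℝ := √(1 - √(1 - 4 * Λ * Q ^ 2)) / √(2 * Λ)

noncomputable def outerCriticalRadius (Λ Q : ℝ) : ℝ := √(1 + √(1 - 4 * Λ * Q ^ 2)) / √(2 * Λ)

section CriticalRadii

variable {Λ Q : ℝ}

lemma sqrt_one_sub_four_mul_le_one (hΛ : 0 ≤ Λ) : √(1 - 4 * Λ * Q ^ 2) ≤ 1 :=
  sqrt_le_one.2 (by nlinarith [sq_nonneg Q])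

lemma sqrt_one_sub_four_mul_lt_one (hΛ : 0 < Λ) (hQ : Q ≠ 0) : √(1 - 4 * Λ * Q ^ 2) < 1 :=
  (sqrt_lt' one_pos).2 (by nlinarith [sq_pos_of_ne_zero hQ])

lemma sq_innerCriticalRadius (hΛ : 0 ≤ Λ) :
    innerCriticalRadius Λ Q ^ 2 = (1 - √(1 - 4 * Λ * Q ^ 2)) / (2 * Λ) := by
  rw [innerCriticalRadius, div_pow, sq_sqrt (sub_nonneg.2 (sqrt_one_sub_four_mul_le_one hΛ)),
    sq_sqrt (by positivity)]

lemma sq_outerCriticalRadius (hΛ : 0 ≤ Λ) :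
    outerCriticalRadius Λ Q ^ 2 = (1 + √(1 - 4 * Λ * Q ^ 2)) / (2 * Λ) := by
  rw [outerCriticalRadius, div_pow, sq_sqrt (by positivity), sq_sqrt (by positivity)]

lemma innerCriticalRadius_pos (hΛ : 0 < Λ) (hQ : Q ≠ 0) : 0 < innerCriticalRadius Λ Q := by
  have hd := sqrt_one_sub_four_mul_lt_one hΛ hQ
  exact div_pos (sqrt_pos.2 (by linarith)) (sqrt_pos.2 (by positivity))

lemma innerCriticalRadius_nonneg : 0 ≤ innerCriticalRadius Λ Q := by
  unfold innerCriticalRadius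
  positivity

lemma outerCriticalRadius_pos (hΛ : 0 < Λ) : 0 < outerCriticalRadius Λ Q :=
  div_pos (sqrt_pos.2 (by positivity)) (sqrt_pos.2 (by positivity))

lemma innerCriticalRadius_le_outerCriticalRadius :
    innerCriticalRadius Λ Q ≤ outerCriticalRadius Λ Q := by
  unfold innerCriticalRadius outerCriticalRadius
  gcongr
  linarith [sqrt_nonneg (1 - 4 * Λ * Q ^ 2)]

lemma sq_innerCriticalRadius_le_sq_outerCriticalRadius :
    innerCriticalRadius Λ Q ^ 2 ≤ outerCriticalRadius Λ Q ^ 2 :=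
  pow_le_pow_left₀ innerCriticalRadius_nonneg innerCriticalRadius_le_outerCriticalRadius 2

lemma horizon_quartic_eq_mul (hΛ : 0 < Λ) (hD : 4 * Λ * Q ^ 2 ≤ 1) (r : ℝ) :
    Λ * r ^ 4 - r ^ 2 + Q ^ 2 =
      Λ * ((r ^ 2 - innerCriticalRadius Λ Q ^ 2) * (r ^ 2 - outerCriticalRadius Λ Q ^ 2)) := by
  have hd := sq_sqrt (sub_nonneg.2 hD)
  rw [sq_innerCriticalRadius hΛ.le, sq_outerCriticalRadius hΛ.le]
  generalize √(1 - 4 * Λ * Q ^ 2) = d at hd ⊢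
  field_simp
  linear_combination hd

/-- Applied with `d = ±√(1 - 4ΛQ²)`, this evaluates `horizonMass` at both critical radii. -/
lemma horizonMass_div_eq {d e u : ℝ} (hu : u ^ 2 = 2 * Λ) (hu₀ : u ≠ 0) (he : e ^ 2 = 1 - d)
    (he₀ : e ≠ 0) (hd : d ^ 2 = 1 - 4 * Λ * Q ^ 2) :
    horizonMass Λ Q (e / u) = (2 + d) / (3 * u) * e := by
  obtain rfl : Λ = u ^ 2 / 2 := by linarith
  obtain rfl : d = 1 - e ^ 2 := by linarith
  unfold horizonMass
  field_simp
  linear_combination 9 * hd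

lemma horizonMass_innerCriticalRadius (hΛ : 0 < Λ) (hQ : Q ≠ 0) (hD : 4 * Λ * Q ^ 2 ≤ 1) :
    horizonMass Λ Q (innerCriticalRadius Λ Q) =
      (2 + √(1 - 4 * Λ * Q ^ 2)) / (3 * √(2 * Λ)) * √(1 - √(1 - 4 * Λ * Q ^ 2)) :=
  horizonMass_div_eq (sq_sqrt (by positivity)) (sqrt_pos.2 (by positivity)).ne'
    (sq_sqrt (sub_nonneg.2 (sqrt_one_sub_four_mul_le_one hΛ.le)))
    (sqrt_pos.2 (sub_pos.2 (sqrt_one_sub_four_mul_lt_one hΛ hQ))).ne' (sq_sqrt (sub_nonneg.2 hD))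

lemma horizonMass_outerCriticalRadius (hΛ : 0 < Λ) (hD : 4 * Λ * Q ^ 2 ≤ 1) :
    horizonMass Λ Q (outerCriticalRadius Λ Q) =
      (2 - √(1 - 4 * Λ * Q ^ 2)) / (3 * √(2 * Λ)) * √(1 + √(1 - 4 * Λ * Q ^ 2)) := by
  rw [sub_eq_add_neg]
  exact horizonMass_div_eq (sq_sqrt (by positivity)) (sqrt_pos.2 (by positivity)).ne'
    (by rw [sq_sqrt (by positivity), sub_neg_eq_add]) (sqrt_pos.2 (by positivity)).ne'
    (by rw [neg_sq, sq_sqrt (sub_nonneg.2 hD)])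

lemma strictAntiOn_horizonMass_Ioc (hΛ : 0 < Λ) (hD : 4 * Λ * Q ^ 2 ≤ 1) :
    StrictAntiOn (horizonMass Λ Q) (Ioc 0 (innerCriticalRadius Λ Q)) :=
  strictAntiOn_horizonMass_of_quartic_pos (convex_Ioc _ _) Ioc_subset_Ioi_self fun r hr => by
    rw [interior_Ioc] at hr
    have hr₁ := pow_lt_pow_left₀ hr.2 hr.1.le two_ne_zero
    have hr₂ := sq_innerCriticalRadius_le_sq_outerCriticalRadius (Λ := Λ) (Q := Q)
    rw [horizon_quartic_eq_mul hΛ hD]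
    exact mul_pos hΛ (mul_pos_of_neg_of_neg (by linarith) (by linarith))

lemma strictMonoOn_horizonMass_Icc (hΛ : 0 < Λ) (hQ : Q ≠ 0) (hD : 4 * Λ * Q ^ 2 ≤ 1) :
    StrictMonoOn (horizonMass Λ Q) (Icc (innerCriticalRadius Λ Q) (outerCriticalRadius Λ Q)) := by
  have ha := innerCriticalRadius_pos hΛ hQ
  refine strictMonoOn_horizonMass_of_quartic_neg (convex_Icc _ _) (fun r hr => ha.trans_le hr.1)
    fun r hr => ?_
  rw [interior_Icc] at hr
  rw [horizon_quartic_eq_mul hΛ hD]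
  exact mul_neg_of_pos_of_neg hΛ (mul_neg_of_pos_of_neg
    (sub_pos.2 (pow_lt_pow_left₀ hr.1 ha.le two_ne_zero))
    (sub_neg.2 (pow_lt_pow_left₀ hr.2 (ha.trans hr.1).le two_ne_zero)))

lemma strictAntiOn_horizonMass_Ici (hΛ : 0 < Λ) (hD : 4 * Λ * Q ^ 2 ≤ 1) :
    StrictAntiOn (horizonMass Λ Q) (Ici (outerCriticalRadius Λ Q)) := by
  have hb := outerCriticalRadius_pos (Q := Q) hΛ
  refine strictAntiOn_horizonMass_of_quartic_pos (convex_Ici _) (fun r hr => hb.trans_le hr)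
    fun r hr => ?_
  rw [interior_Ici] at hr
  have hr₂ := pow_lt_pow_left₀ (mem_Ioi.1 hr) hb.le two_ne_zero
  have hr₁ := sq_innerCriticalRadius_le_sq_outerCriticalRadius (Λ := Λ) (Q := Q)
  rw [horizon_quartic_eq_mul hΛ hD]
  exact mul_pos hΛ (mul_pos (by linarith) (by linarith))

end CriticalRadii

section HorizonCount

variable {Λ Q m : ℝ}

lemma encard_horizonMass_fiber_le_two_of_charge_eq_zero (hΛ : 0 < Λ) :
    (Ioi 0 ∩ horizonMass Λ 0 ⁻¹' {m}).encard ≤ 2 := by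
  have hD : 4 * Λ * (0 : ℝ) ^ 2 ≤ 1 := by norm_num
  have ha : innerCriticalRadius Λ 0 = 0 := by simp [innerCriticalRadius]
  set b := outerCriticalRadius Λ 0
  have hmono : StrictMonoOn (horizonMass Λ 0) (Ioc 0 b) :=
    strictMonoOn_horizonMass_of_quartic_neg (convex_Ioc _ _) Ioc_subset_Ioi_self fun r hr => by
      rw [interior_Ioc] at hr
      rw [horizon_quartic_eq_mul hΛ hD, ha]
      exact mul_neg_of_pos_of_neg hΛ (mul_neg_of_pos_of_neg
        (sub_pos.2 (pow_lt_pow_left₀ hr.1 le_rfl two_ne_zero))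
        (sub_neg.2 (pow_lt_pow_left₀ hr.2 hr.1.le two_ne_zero)))
  have hcover : Ioi 0 ∩ horizonMass Λ 0 ⁻¹' {m} ⊆
      (Ioc 0 b ∩ horizonMass Λ 0 ⁻¹' {m}) ∪ (Ici b ∩ horizonMass Λ 0 ⁻¹' {m}) := by
    rintro r ⟨hr, hmr⟩
    rcases le_or_gt r b with hrb | hrb
    · exact Or.inl ⟨⟨hr, hrb⟩, hmr⟩
    · exact Or.inr ⟨hrb.le, hmr⟩
  calc _ ≤ _ := encard_le_encard hcover
    _ ≤ 1 + 1 := (encard_union_le _ _).trans (add_le_add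
      (hmono.injOn.encard_inter_preimage_singleton_le_one m)
      ((strictAntiOn_horizonMass_Ici hΛ hD).injOn.encard_inter_preimage_singleton_le_one m))
    _ = 2 := by norm_num

lemma bounds_of_encard_horizonMass_fiber_eq_three (hΛ : 0 < Λ)
    (h : (Ioi 0 ∩ horizonMass Λ Q ⁻¹' {m}).encard = 3) :
    Q ≠ 0 ∧ 4 * Λ * Q ^ 2 < 1 ∧ horizonMass Λ Q (innerCriticalRadius Λ Q) < m ∧
      m < horizonMass Λ Q (outerCriticalRadius Λ Q) := by
  have hQ : Q ≠ 0 := by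
    rintro rfl
    have := encard_horizonMass_fiber_le_two_of_charge_eq_zero (m := m) hΛ
    rw [h] at this
    norm_num at this
  have hD : 4 * Λ * Q ^ 2 ≤ 1 := by
    by_contra! hD
    have := (strictAntiOn_horizonMass_Ioi hΛ hD).injOn.encard_inter_preimage_singleton_le_one m
    rw [h] at this
    norm_num at this
  obtain ⟨hlo, hhi⟩ := lt_and_lt_of_encard_fiber_eq_three (innerCriticalRadius_pos hΛ hQ)
    innerCriticalRadius_le_outerCriticalRadius (strictAntiOn_horizonMass_Ioc hΛ hD)
    (strictMonoOn_horizonMass_Icc hΛ hQ hD) (strictAntiOn_horizonMass_Ici hΛ hD) h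
  refine ⟨hQ, hD.lt_of_ne fun hD₁ => (hlo.trans hhi).ne ?_, hlo, hhi⟩
  simp [innerCriticalRadius, outerCriticalRadius, hD₁]

lemma encard_horizonMass_fibers_of_bounds (hΛ : 0 < Λ) (hQ : Q ≠ 0) (hD : 4 * Λ * Q ^ 2 ≤ 1)
    (hlo : horizonMass Λ Q (innerCriticalRadius Λ Q) < m)
    (hhi : m < horizonMass Λ Q (outerCriticalRadius Λ Q)) :
    (Ioi 0 ∩ horizonMass Λ Q ⁻¹' {m}).encard = 3 ∧
      (Ioi 0 ∩ horizonMass Λ Q ⁻¹' {-m}).encard = 1 := by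
  have ha := innerCriticalRadius_pos hΛ hQ
  have h₁ := strictAntiOn_horizonMass_Ioc hΛ hD
  have h₂ := strictMonoOn_horizonMass_Icc hΛ hQ hD
  have h₃ := strictAntiOn_horizonMass_Ici hΛ hD
  have hcont := continuousOn_horizonMass Λ Q
  have hTop := tendsto_horizonMass_atTop Q hΛ
  have hinner : 0 ≤ horizonMass Λ Q (innerCriticalRadius Λ Q) := by
    rw [horizonMass_innerCriticalRadius hΛ hQ hD]
    positivity
  exact ⟨encard_fiber_eq_three ha innerCriticalRadius_le_outerCriticalRadius h₁ h₂ h₃ hcont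
      (tendsto_horizonMass_nhdsGT_zero Λ hQ) hTop hlo hhi,
    encard_fiber_eq_one ha innerCriticalRadius_le_outerCriticalRadius h₁ h₂ h₃
      (hcont.mono fun r hr => (outerCriticalRadius_pos hΛ).trans_le hr) hTop (by linarith)⟩

end HorizonCount

/-- The Reissner–Nordström–de Sitter horizon quartic
`p(r) = (Λ/3) r⁴ − r² + 2 m r − Q²` has exactly three distinct positive real
roots and exactly one negative real root if and only if `0 < Q² < 1/(4Λ)` and
the mass `m` lies in the explicitly given interval. -/
theorem rnds_three_positive_roots_iff (Λ m Q : ℝ) (hΛ : 0 < Λ) :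
    (({r : ℝ | 0 < r ∧ Λ / 3 * r ^ 4 - r ^ 2 + 2 * m * r - Q ^ 2 = 0}.encard = 3) ∧
      ({r : ℝ | r < 0 ∧ Λ / 3 * r ^ 4 - r ^ 2 + 2 * m * r - Q ^ 2 = 0}.encard = 1)) ↔
    (0 < Q ^ 2 ∧ Q ^ 2 < 1 / (4 * Λ) ∧
      (2 + Real.sqrt (1 - 4 * Λ * Q ^ 2)) / (3 * Real.sqrt (2 * Λ)) *
          Real.sqrt (1 - Real.sqrt (1 - 4 * Λ * Q ^ 2)) < m ∧
      m < (2 - Real.sqrt (1 - 4 * Λ * Q ^ 2)) / (3 * Real.sqrt (2 * Λ)) *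
          Real.sqrt (1 + Real.sqrt (1 - 4 * Λ * Q ^ 2))) := by
  rw [setOf_pos_horizon_root_eq, encard_setOf_neg_horizon_root, sq_pos_iff,
    lt_div_iff₀ (by positivity), mul_comm (Q ^ 2) (4 * Λ)]
  constructor
  · rintro ⟨h₃, -⟩
    obtain ⟨hQ, hD, hlo, hhi⟩ := bounds_of_encard_horizonMass_fiber_eq_three hΛ h₃
    rw [horizonMass_innerCriticalRadius hΛ hQ hD.le] at hlo
    rw [horizonMass_outerCriticalRadius hΛ hD.le] at hhi
    exact ⟨hQ, hD, hlo, hhi⟩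
  · rintro ⟨hQ, hD, hlo, hhi⟩
    rw [← horizonMass_innerCriticalRadius hΛ hQ hD.le] at hlo
    rw [← horizonMass_outerCriticalRadius hΛ hD.le] at hhi
    exact encard_horizonMass_fibers_of_bounds hΛ hQ hD.le hlo hhi
end

section
/- Let Λ > 0, Q ∈ ℝ, let I ⊆ ℝ be an open interval, and let u : I → ℝ be twice differentiable with u(s) > 0 for all s ∈ I, satisfying u''(s) = (1 − u'(s)²)/(2u(s)) − (Λ u(s)⁴ + Q²)/(2 u(s)³) on I. If u attains a local minimum at some s₀ ∈ I, then Λ u(s₀)⁴ + Q² ≤ u(s₀)²; consequently u(s₀)² ≤ 1/Λ and Q² ≤ 1/(4Λ). In particular, for Λ = 1 the minimal slice has area 4πu(s₀)² ≤ 4π < 8π. -/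
/-!
At a local minimum `s₀` of `u` the first derivative vanishes and the second is nonnegative, so the
ODE evaluated at `s₀` reads `0 ≤ (u² − Λu⁴ − Q²) / (2u³)`, i.e. `Λu⁴ + Q² ≤ u²`. Both remaining
bounds follow from this: dropping `Q²` gives `Λu² ≤ 1`, and `Q² ≤ x − Λx²` with `x = u²` is at most
the maximum `1 / (4Λ)` of that parabola.
-/

open Filter Topology

theorem IsLocalMin.deriv_deriv_nonneg {f : ℝ → ℝ} {x₀ : ℝ} (hmin : IsLocalMin f x₀)
    (hc : ContinuousAt f x₀) : 0 ≤ deriv (deriv f) x₀ := by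
  by_contra! hneg
  have hmax : IsLocalMax f x₀ := isLocalMax_of_deriv_deriv_neg hneg hmin.deriv_eq_zero hc
  have hconst : f =ᶠ[𝓝 x₀] fun _ => f x₀ := by
    filter_upwards [hmin, hmax] with x hx₁ hx₂ using le_antisymm hx₂ hx₁
  have hderiv : deriv f =ᶠ[𝓝 x₀] fun _ => 0 := by
    filter_upwards [hconst.eventuallyEq_nhds] with x hx
    rw [hx.deriv_eq, deriv_const]
  rw [hderiv.deriv_eq, deriv_const] at hneg
  exact lt_irrefl 0 hneg

theorem mul_pow_four_add_sq_le_sq_of_accel_nonneg {Λ Q U : ℝ} (hU : 0 < U)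
    (h : 0 ≤ (1 - 0 ^ 2) / (2 * U) - (Λ * U ^ 4 + Q ^ 2) / (2 * U ^ 3)) :
    Λ * U ^ 4 + Q ^ 2 ≤ U ^ 2 := by
  have hrhs : (1 - 0 ^ 2) / (2 * U) - (Λ * U ^ 4 + Q ^ 2) / (2 * U ^ 3)
      = (U ^ 2 - (Λ * U ^ 4 + Q ^ 2)) / (2 * U ^ 3) := by
    field_simp
    ring
  rw [hrhs, le_div_iff₀ (by positivity)] at h
  linarith

section

variable {Λ Q U : ℝ}

theorem sq_le_one_div_of_mul_pow_four_add_sq_le (hΛ : 0 < Λ) (h : Λ * U ^ 4 + Q ^ 2 ≤ U ^ 2) :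
    U ^ 2 ≤ 1 / Λ := by
  rw [le_div_iff₀ hΛ]
  nlinarith [sq_nonneg Q, sq_nonneg U]

theorem sq_le_one_div_four_mul_of_mul_pow_four_add_sq_le (hΛ : 0 < Λ)
    (h : Λ * U ^ 4 + Q ^ 2 ≤ U ^ 2) : Q ^ 2 ≤ 1 / (4 * Λ) := by
  rw [le_div_iff₀ (by positivity)]
  nlinarith [sq_nonneg (2 * Λ * U ^ 2 - 1)]

end

theorem rnds_minimal_slice_area_bound_general (Λ Q a b : ℝ) (hΛ : 0 < Λ) (u : ℝ → ℝ)
    (hdiff : ∀ s ∈ Set.Ioo a b, DifferentiableAt ℝ u s)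
    (hpos : ∀ s ∈ Set.Ioo a b, 0 < u s)
    (hODE : ∀ s ∈ Set.Ioo a b, deriv (deriv u) s =
      (1 - (deriv u s) ^ 2) / (2 * u s) - (Λ * (u s) ^ 4 + Q ^ 2) / (2 * (u s) ^ 3))
    (s₀ : ℝ) (hs₀ : s₀ ∈ Set.Ioo a b) (hmin : IsLocalMin u s₀) :
    Λ * (u s₀) ^ 4 + Q ^ 2 ≤ (u s₀) ^ 2 ∧ (u s₀) ^ 2 ≤ 1 / Λ ∧ Q ^ 2 ≤ 1 / (4 * Λ) ∧
      (Λ = 1 → 4 * Real.pi * (u s₀) ^ 2 ≤ 4 * Real.pi ∧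
        (4 * Real.pi : ℝ) < 8 * Real.pi) := by
  have hcrit : Λ * u s₀ ^ 4 + Q ^ 2 ≤ u s₀ ^ 2 := by
    have haccel := hmin.deriv_deriv_nonneg (hdiff s₀ hs₀).continuousAt
    rw [hODE s₀ hs₀, hmin.deriv_eq_zero] at haccel
    exact mul_pow_four_add_sq_le_sq_of_accel_nonneg (hpos s₀ hs₀) haccel
  have harea := sq_le_one_div_of_mul_pow_four_add_sq_le hΛ hcrit
  refine ⟨hcrit, harea, sq_le_one_div_four_mul_of_mul_pow_four_add_sq_le hΛ hcrit,
    fun hΛ₁ => ⟨?_, by linarith [Real.pi_pos]⟩⟩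
  subst hΛ₁
  exact mul_le_of_le_one_right (by positivity) (by simpa using harea)

/-- At a local minimum `s₀` of a positive solution of
`u'' = (1 − u'²)/(2u) − (Λu⁴ + Q²)/(2u³)` one has `Λu(s₀)⁴ + Q² ≤ u(s₀)²`;
hence `u(s₀)² ≤ 1/Λ` and `Q² ≤ 1/(4Λ)`. In particular, for `Λ = 1` the
minimal slice has area `4πu(s₀)² ≤ 4π < 8π`. -/
theorem rnds_minimal_slice_area_bound (Λ Q a b : ℝ) (hΛ : 0 < Λ) (u : ℝ → ℝ)
    (hdiff : ∀ s ∈ Set.Ioo a b, DifferentiableAt ℝ u s)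
    (hdiff' : ∀ s ∈ Set.Ioo a b, DifferentiableAt ℝ (deriv u) s)
    (hpos : ∀ s ∈ Set.Ioo a b, 0 < u s)
    (hODE : ∀ s ∈ Set.Ioo a b, deriv (deriv u) s =
      (1 - (deriv u s) ^ 2) / (2 * u s) - (Λ * (u s) ^ 4 + Q ^ 2) / (2 * (u s) ^ 3))
    (s₀ : ℝ) (hs₀ : s₀ ∈ Set.Ioo a b) (hmin : IsLocalMin u s₀) :
    Λ * (u s₀) ^ 4 + Q ^ 2 ≤ (u s₀) ^ 2 ∧ (u s₀) ^ 2 ≤ 1 / Λ ∧ Q ^ 2 ≤ 1 / (4 * Λ) ∧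
      (Λ = 1 → 4 * Real.pi * (u s₀) ^ 2 ≤ 4 * Real.pi ∧
        (4 * Real.pi : ℝ) < 8 * Real.pi) :=
  rnds_minimal_slice_area_bound_general Λ Q a b hΛ u hdiff hpos hODE s₀ hs₀ hmin
end
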